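/- For fixed nonnegative reals α, β, k and x ∈ [0,1], lim_{n→∞} n·K_n^{(α,β,k)}((e₁−x)²;x) = (k+1)x(1−x). -/

import Mathlib

open Finset Filter

/-- Pochhammer k-symbol: `(λ)_{m,k} = λ(λ+k)⋯(λ+(m-1)k)`. -/
noncomputable def pochK (lam k : ℝ) (m : ℕ) : ℝ :=
  ∏ i ∈ Finset.range m, (lam + i * k)

/-- Lupaş-type operator based on Polya distribution with Pochhammer k-symbol. -/
noncomputable def LupasP (n : ℕ) (k : ℝ) (f : ℝ → ℝ) (x : ℝ) : ℝ :=
  (1 / pochK n k n) * ∑ m ∈ Finset.range (n + 1),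
    (n.choose m : ℝ) * pochK (n * x) k m * pochK (n - n * x) k (n - m) * f (m / n)

/-- Kantorovich-Stancu modification of the Lupaş-type operator. -/
noncomputable def KantK (n : ℕ) (α β k : ℝ) (f : ℝ → ℝ) (x : ℝ) : ℝ :=
  ((n + β + 1) / pochK n k n) * ∑ m ∈ Finset.range (n + 1),
    (n.choose m : ℝ) * pochK (n * x) k m * pochK (n - n * x) k (n - m) *
      ∫ t in ((m + α) / (n + β + 1))..((m + α + 1) / (n + β + 1)), f t

/-- Modulus of continuity of `f` on `[0,1]`. -/
noncomputable def modulus (f : ℝ → ℝ) (δ : ℝ) : ℝ :=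
  sSup {y | ∃ x t : ℝ, x ∈ Set.Icc (0:ℝ) 1 ∧ t ∈ Set.Icc (0:ℝ) 1 ∧
    |t - x| ≤ δ ∧ y = |f t - f x|}

lemma pochK_zero (c k : ℝ) : pochK c k 0 = 1 := by simp [pochK]

lemma pochK_succ (c k : ℝ) (n : ℕ) : pochK c k (n+1) = pochK c k n * (c + n * k) := by
  simp [pochK, Finset.prod_range_succ]

lemma pochK_succ' (c k : ℝ) (n : ℕ) : pochK c k (n+1) = c * pochK (c+k) k n := by
  rw [pochK, Finset.prod_range_succ']
  simp only [Nat.cast_zero, zero_mul, add_zero]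
  rw [mul_comm, pochK]
  congr 1
  refine Finset.prod_congr rfl fun i _ => ?_
  push_cast; ring

lemma vandermondeK (k : ℝ) : ∀ (n : ℕ) (a b : ℝ),
    ∑ m ∈ Finset.range (n+1), (n.choose m : ℝ) * pochK a k m * pochK b k (n-m)
      = pochK (a+b) k n := by
  intro n
  induction n with
  | zero => intro a b; simp [pochK]
  | succ n ih =>
    intro a b
    rw [Finset.sum_range_succ'
      (fun m => (((n+1).choose m : ℕ) : ℝ) * pochK a k m * pochK b k (n+1-m)) (n+1)]
    have hF : ∀ m ∈ Finset.range (n+1),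
        (((n+1).choose (m+1) : ℕ) : ℝ) * pochK a k (m+1) * pochK b k (n+1-(m+1))
        = (n.choose m : ℝ) * pochK a k m * pochK b k (n-m) * (a + m*k)
          + (n.choose (m+1) : ℝ) * pochK a k (m+1) * pochK b k (n+1-(m+1)) := by
      intro m hm
      have h1 : n + 1 - (m+1) = n - m := by omega
      rw [h1, Nat.choose_succ_succ, pochK_succ]
      push_cast
      ring
    rw [Finset.sum_congr rfl hF, Finset.sum_add_distrib]
    have hH : (∑ m ∈ Finset.range (n+1),
          (n.choose (m+1) : ℝ) * pochK a k (m+1) * pochK b k (n+1-(m+1)))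
        + (((n+1).choose 0 : ℕ) : ℝ) * pochK a k 0 * pochK b k (n+1-0)
        = ∑ m ∈ Finset.range (n+1),
          (n.choose m : ℝ) * pochK a k m * (pochK b k (n-m) * (b + ((n:ℝ)-m) * k)) := by
      have := (Finset.sum_range_succ'
        (fun m => ((n.choose m : ℕ) : ℝ) * pochK a k m * pochK b k (n+1-m)) (n+1)).symm
      simp only [Nat.choose_succ_self, Nat.cast_zero, Nat.choose_zero_right,
        Nat.cast_one] at this ⊢
      rw [this, Finset.sum_range_succ]
      simp only [Nat.choose_succ_self, Nat.cast_zero, zero_mul, add_zero]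
      refine Finset.sum_congr rfl fun m hm => ?_
      have hm' : m ≤ n := by simpa using Nat.lt_succ_iff.mp (Finset.mem_range.mp hm)
      have h1 : n + 1 - m = (n - m) + 1 := by omega
      rw [h1, pochK_succ]
      have : ((n - m : ℕ) : ℝ) = (n : ℝ) - m := by
        rw [Nat.cast_sub hm']
      rw [this]
    rw [add_assoc, hH, ← Finset.sum_add_distrib]
    have : ∀ m ∈ Finset.range (n+1),
        (n.choose m : ℝ) * pochK a k m * pochK b k (n-m) * (a + m*k)
          + (n.choose m : ℝ) * pochK a k m * (pochK b k (n-m) * (b + ((n:ℝ)-m) * k))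
        = ((n.choose m : ℝ) * pochK a k m * pochK b k (n-m)) * (a + b + n*k) := by
      intro m hm; ring
    rw [Finset.sum_congr rfl this, ← Finset.sum_mul, ih, ← pochK_succ]

lemma sum_one_momK (k : ℝ) (n : ℕ) (a b : ℝ) :
    ∑ m ∈ Finset.range (n+1), (m : ℝ) * (n.choose m : ℝ) * pochK a k m * pochK b k (n-m)
      = n * a * pochK (a+b+k) k (n-1) := by
  cases n with
  | zero => simp
  | succ n =>
    rw [Finset.sum_range_succ'
      (fun m => (m : ℝ) * (((n+1).choose m : ℕ) : ℝ) * pochK a k m * pochK b k (n+1-m)) (n+1)]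
    simp only [Nat.cast_zero, zero_mul, add_zero]
    have hF : ∀ m ∈ Finset.range (n+1),
        ((m+1 : ℕ) : ℝ) * (((n+1).choose (m+1) : ℕ) : ℝ) * pochK a k (m+1) * pochK b k (n+1-(m+1))
        = ((n:ℝ)+1) * a * ((n.choose m : ℝ) * pochK (a+k) k m * pochK b k (n-m)) := by
      intro m hm
      have h1 : n + 1 - (m+1) = n - m := by omega
      have h2 : ((n+1 : ℕ) : ℝ) * ((n.choose m : ℕ) : ℝ)
          = (((n+1).choose (m+1) : ℕ) : ℝ) * ((m+1 : ℕ) : ℝ) := by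
        rw [← Nat.cast_mul, ← Nat.cast_mul, Nat.add_one_mul_choose_eq]
      rw [h1, pochK_succ']
      push_cast at h2 ⊢
      linear_combination -(a * pochK (a + k) k m * pochK b k (n - m)) * h2
    rw [Finset.sum_congr rfl hF, ← Finset.mul_sum, vandermondeK]
    have : a + k + b = a + b + k := by ring
    rw [this]
    push_cast
    simp

lemma sum_two_momK (k : ℝ) (n : ℕ) (a b : ℝ) :
    ∑ m ∈ Finset.range (n+1),
        (m : ℝ) * ((m : ℝ) - 1) * (n.choose m : ℝ) * pochK a k m * pochK b k (n-m)
      = n * ((n:ℝ) - 1) * a * (a+k) * pochK (a+b+2*k) k (n-2) := by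
  cases n with
  | zero => simp
  | succ n =>
    rw [Finset.sum_range_succ'
      (fun m => (m : ℝ) * ((m : ℝ) - 1) * (((n+1).choose m : ℕ) : ℝ) * pochK a k m
        * pochK b k (n+1-m)) (n+1)]
    simp only [Nat.cast_zero, zero_mul, add_zero, zero_sub, mul_zero]
    have hF : ∀ m ∈ Finset.range (n+1),
        ((m+1 : ℕ) : ℝ) * (((m+1 : ℕ) : ℝ) - 1) * (((n+1).choose (m+1) : ℕ) : ℝ)
          * pochK a k (m+1) * pochK b k (n+1-(m+1))
        = ((n:ℝ)+1) * a
          * ((m:ℝ) * (n.choose m : ℝ) * pochK (a+k) k m * pochK b k (n-m)) := by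
      intro m hm
      have h1 : n + 1 - (m+1) = n - m := by omega
      have h2 : ((n+1 : ℕ) : ℝ) * ((n.choose m : ℕ) : ℝ)
          = (((n+1).choose (m+1) : ℕ) : ℝ) * ((m+1 : ℕ) : ℝ) := by
        rw [← Nat.cast_mul, ← Nat.cast_mul, Nat.add_one_mul_choose_eq]
      rw [h1, pochK_succ']
      push_cast at h2 ⊢
      linear_combination -((m:ℝ) * a * pochK (a + k) k m * pochK b k (n - m)) * h2
    rw [Finset.sum_congr rfl hF, ← Finset.mul_sum, sum_one_momK]
    have h3 : a + k + b + k = a + b + 2*k := by ring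
    have h4 : (n + 1) - 2 = n - 1 := by omega
    rw [h3, h4]
    push_cast
    ring

lemma integral_sq (u xv N : ℝ) (hN : N ≠ 0) :
    (∫ t in (u/N)..((u+1)/N), (t - xv)^2)
      = ((u - xv*N)^2 + (u - xv*N) + 1/3)/N^3 := by
  rw [intervalIntegral.integral_comp_sub_right (fun s => s^2) xv, integral_pow]
  field_simp
  have h3 : N ^ 3 * N⁻¹ ^ 3 = 1 := by rw [← mul_pow, mul_inv_cancel₀ hN, one_pow]
  linear_combination (9*u+9*u^2+3 - N*(18*u*xv+9*xv) + 9*N^2*xv^2) * h3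

lemma pochK_pos (c k : ℝ) (hc : 0 < c) (hk : 0 ≤ k) (m : ℕ) : 0 < pochK c k m := by
  refine Finset.prod_pos fun i _ => ?_
  have : (0:ℝ) ≤ i * k := mul_nonneg (Nat.cast_nonneg i) hk
  linarith

lemma kant_eq (α β k x : ℝ) (hβ : 0 ≤ β) (hk : 0 ≤ k) (n : ℕ) (hn : 2 ≤ n) :
    KantK n α β k (fun t => (t - x)^2) x
      = (x*(1-x)*((n:ℝ)^2*(k+1)/((n:ℝ)+k) - (β+1)^2) + (β+1)*(β-2*α)*x
          + ((α+1)^3 - α^3)/3) / ((n:ℝ)+β+1)^2 := by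
  obtain ⟨p, rfl⟩ : ∃ p, n = p + 2 := ⟨n - 2, by omega⟩
  set n := p + 2 with hn2
  have hnpos : (0:ℝ) < (n:ℝ) := by positivity
  have hN : (0:ℝ) < (n:ℝ) + β + 1 := by linarith
  set N : ℝ := (n:ℝ) + β + 1 with hNdef
  set c : ℝ := α - x * N with hcdef
  set a : ℝ := (n:ℝ) * x with hadef
  set b : ℝ := (n:ℝ) - (n:ℝ) * x with hbdef
  have hab : a + b = (n:ℝ) := by rw [hadef, hbdef]; ring
  -- the integral
  have hint : ∀ m ∈ Finset.range (n + 1),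
      (n.choose m : ℝ) * pochK a k m * pochK b k (n - m) *
        ∫ t in (((m:ℝ) + α) / N)..(((m:ℝ) + α + 1) / N), (t - x)^2
      = ((m:ℝ) * ((m:ℝ) - 1) * (n.choose m : ℝ) * pochK a k m * pochK b k (n-m)
          + ((2*c+2) * ((m:ℝ) * (n.choose m : ℝ) * pochK a k m * pochK b k (n-m))
            + (c^2 + c + 1/3) * ((n.choose m : ℝ) * pochK a k m * pochK b k (n-m)))) / N^3 := by
    intro m hm
    rw [integral_sq ((m:ℝ) + α) x N hN.ne']
    have : (m:ℝ) + α - x * N = (m:ℝ) + c := by rw [hcdef]; ring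
    rw [this]
    field_simp
    ring
  -- the sum
  have hsum : ∑ m ∈ Finset.range (n + 1),
      (n.choose m : ℝ) * pochK a k m * pochK b k (n - m) *
        ∫ t in (((m:ℝ) + α) / N)..(((m:ℝ) + α + 1) / N), (t - x)^2
      = ((n:ℝ) * ((n:ℝ) - 1) * a * (a+k) * pochK ((n:ℝ)+2*k) k (n-2)
          + ((2*c+2) * ((n:ℝ) * a * pochK ((n:ℝ)+k) k (n-1))
            + (c^2 + c + 1/3) * pochK (n:ℝ) k n)) / N^3 := by
    rw [Finset.sum_congr rfl hint, ← Finset.sum_div, Finset.sum_add_distrib,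
      Finset.sum_add_distrib, ← Finset.mul_sum, ← Finset.mul_sum,
      sum_two_momK, sum_one_momK, vandermondeK]
    rw [show a + b + 2*k = (n:ℝ) + 2*k by rw [← hab],
      show a + b + k = (n:ℝ) + k by rw [← hab], hab]
  -- decompose pochK n k n
  set Q : ℝ := pochK ((n:ℝ) + 2*k) k p with hQdef
  have hQpos : 0 < Q := pochK_pos _ _ (by linarith) hk _
  have e2 : pochK ((n:ℝ)+k) k (n-1) = ((n:ℝ)+k) * Q := by
    have : n - 1 = p + 1 := by omega
    rw [this, pochK_succ', hQdef]
    rw [show (n:ℝ) + k + k = (n:ℝ) + 2*k by ring]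
  have e1 : pochK (n:ℝ) k n = (n:ℝ) * (((n:ℝ)+k) * Q) := by
    have : n = (n-1) + 1 := by omega
    rw [show pochK (n:ℝ) k n = pochK (n:ℝ) k ((n-1)+1) by rw [← this], pochK_succ', e2]
  have e3 : pochK ((n:ℝ)+2*k) k (n-2) = Q := by
    rw [show n - 2 = p by omega, hQdef]
  simp only [KantK]
  rw [← hadef, ← hbdef, ← hNdef]
  rw [hsum, e1, e2, e3]
  have hnk : (0:ℝ) < (n:ℝ) + k := by linarith
  rw [hcdef, hNdef, hadef]
  field_simp
  ring

theorem kant_central_moment_two_limit (α β k : ℝ)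
    (hα : 0 ≤ α) (hβ : 0 ≤ β) (hk : 0 ≤ k)
    (x : ℝ) (hx : x ∈ Set.Icc (0:ℝ) 1) :
    Filter.Tendsto (fun n : ℕ => (n : ℝ) * KantK n α β k (fun t => (t - x) ^ 2) x)
      Filter.atTop (nhds ((k + 1) * x * (1 - x))) := by
  set D : ℝ := -(x*(1-x))*(β+1)^2 + (β+1)*(β-2*α)*x + ((α+1)^3 - α^3)/3 with hD
  have t1 : Tendsto (fun n : ℕ => (n:ℝ)/((n:ℝ)+k)) atTop (nhds 1) :=
    tendsto_natCast_div_add_atTop (k : ℝ)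
  have t2 : Tendsto (fun n : ℕ => (n:ℝ)/((n:ℝ)+(β+1))) atTop (nhds 1) :=
    tendsto_natCast_div_add_atTop ((β+1) : ℝ)
  have t3 : Tendsto (fun n : ℕ => 1/((n:ℝ)+(β+1))) atTop (nhds 0) := by
    simp only [one_div]
    exact tendsto_inv_atTop_zero.comp
      (tendsto_atTop_add_const_right atTop (β+1) tendsto_natCast_atTop_atTop)
  have hmain : Tendsto (fun n : ℕ =>
        (k+1)*x*(1-x) * ((n:ℝ)/((n:ℝ)+k)) * ((n:ℝ)/((n:ℝ)+(β+1)))^2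
          + D * (((n:ℝ)/((n:ℝ)+(β+1))) * (1/((n:ℝ)+(β+1)))))
      atTop (nhds ((k+1)*x*(1-x) * 1 * 1^2 + D * (1 * 0))) :=
    Tendsto.add ((t1.const_mul _).mul (t2.pow 2)) ((t2.mul t3).const_mul _)
  have hval : (k+1)*x*(1-x) * 1 * 1^2 + D * (1 * 0) = (k + 1) * x * (1 - x) := by ring
  rw [hval] at hmain
  refine hmain.congr' ?_
  filter_upwards [eventually_ge_atTop 2] with n hn
  rw [kant_eq α β k x hβ hk n hn]
  have hnpos : (0:ℝ) < (n:ℝ) := by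
    have : (2:ℝ) ≤ (n:ℝ) := by exact_mod_cast hn
    linarith
  have hN : ((n:ℝ)+β+1) ≠ 0 := by linarith
  have hnk : ((n:ℝ)+k) ≠ 0 := by linarith
  rw [hD]
  field_simp
  ring
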